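/- arXiv:2007.01592 — 2 statements merged into one kernel-verified Lean document; each statement's English description precedes it below -/
import Mathlib

section
/- Suppose R̂, R : ℝ^R → ℝ differ by an affine function: R(θ) − R̂(θ) = gᵀθ + c for some g ∈ ℝ^R, c ∈ ℝ. Let f : ℝ^R → [0,∞) satisfy the dual-norm inequality |gᵀθ| ≤ N(g) f(θ) for all θ, where N(g) ≥ 0. If θ̂ satisfies R̂(θ̂) ≤ R̂(θ⋆) + ρ f(θ⋆) − ρ f(θ̂) and ρ ≥ N(g), then R(θ̂) ≤ R(θ⋆) + 2ρ f(θ⋆). -/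
theorem oracle_inequality_step (R : ℕ) (Rout Rhat : (Fin R → ℝ) → ℝ)
    (g : Fin R → ℝ) (c : ℝ) (f : (Fin R → ℝ) → ℝ) (N ρ : ℝ)
    (haffine : ∀ θ, Rout θ - Rhat θ = (∑ k, g k * θ k) + c)
    (hf : ∀ θ, 0 ≤ f θ)
    (hdual : ∀ θ, |∑ k, g k * θ k| ≤ N * f θ)
    (hN : 0 ≤ N) (hρ : 0 ≤ ρ)
    (θhat θstar : Fin R → ℝ)
    (hmin : Rhat θhat ≤ Rhat θstar + ρ * f θstar - ρ * f θhat)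
    (hev : N ≤ ρ) :
    Rout θhat ≤ Rout θstar + 2 * ρ * f θstar := by
  have h1 := haffine θhat
  have h2 := haffine θstar
  have d1 := abs_le.mp (hdual θhat)
  have d2 := abs_le.mp (hdual θstar)
  have hfh := hf θhat
  have hfs := hf θstar
  nlinarith [mul_le_mul_of_nonneg_right hev hfh, mul_le_mul_of_nonneg_right hev hfs]
end

section
/- Main theorem (deterministic part combined with concentration): Let θ̂ minimize R̂(θ) + ρ‖w ⊙ θ‖₁ with ρ = n^{−γ}, γ ∈ (0, 1/2), where R(θ) − R̂(θ) = gᵀθ + c with g = (E_n[z_1],...,E_n[z_R]), each z_k an average of n i.i.d. mean-zero variables in [−Y, Y], and w₀ = min_k w_k > 0. Then with probability at least 1 − 2R exp(−w₀² n^{1−2γ}/(2Y²)), R(θ̂) ≤ R(θ⋆) + 2 n^{−γ} ‖w ⊙ θ⋆‖₁, where θ⋆ minimizes R. -/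
open MeasureTheory ProbabilityTheory Real

/-!
Since `R - R̂` is affine with slope `g`, comparing `θ̂` with `θ⋆` in the penalized problem gives
`R(θ̂) ≤ R(θ⋆) + 2ρ‖w ⊙ θ⋆‖₁` as soon as `|g k| ≤ ρ w k` for every `k`, and this holds whenever
`|∑ i, z k i| < n ρ w₀` for every `k`. By Hoeffding's inequality each of these `R` events fails with
probability at most `2 exp (-w₀² n^(1-2γ) / (2Y²))`, and a union bound concludes.
-/

namespace ProbabilityTheory

variable {Ω : Type*} [MeasurableSpace Ω] {μ : Measure Ω}

lemma HasSubgaussianMGF.measure_abs_ge_le {X : Ω → ℝ} {c : NNReal}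
    (h : HasSubgaussianMGF X c μ) {ε : ℝ} (hε : 0 ≤ ε) :
    μ.real {ω | ε ≤ |X ω|} ≤ 2 * exp (-ε ^ 2 / (2 * c)) := by
  have hsplit : {ω | ε ≤ |X ω|} = {ω | ε ≤ X ω} ∪ {ω | ε ≤ (-X) ω} := by
    ext ω
    simp only [Set.mem_ofPred_eq, Set.mem_union, Pi.neg_apply, le_abs']
    constructor <;> rintro (h | h) <;> [right; left; right; left] <;> linarith
  calc μ.real {ω | ε ≤ |X ω|}
      ≤ μ.real {ω | ε ≤ X ω} + μ.real {ω | ε ≤ (-X) ω} := hsplit ▸ measureReal_union_le _ _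
    _ ≤ exp (-ε ^ 2 / (2 * c)) + exp (-ε ^ 2 / (2 * c)) :=
        add_le_add (h.measure_ge_le hε) (h.neg.measure_ge_le hε)
    _ = 2 * exp (-ε ^ 2 / (2 * c)) := by ring

lemma measure_abs_sum_ge_le_of_mem_Icc [IsProbabilityMeasure μ] {ι : Type*} [Fintype ι]
    {X : ι → Ω → ℝ} {a b ε : ℝ} (hindep : iIndepFun X μ) (hmeas : ∀ i, AEMeasurable (X i) μ)
    (hbdd : ∀ i, ∀ᵐ ω ∂μ, X i ω ∈ Set.Icc a b) (hmean : ∀ i, μ[X i] = 0) (hε : 0 ≤ ε) :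
    μ.real {ω | ε ≤ |∑ i, X i ω|} ≤
      2 * exp (-2 * ε ^ 2 / (Fintype.card ι * (b - a) ^ 2)) := by
  have hsub := HasSubgaussianMGF.sum_of_iIndepFun hindep (s := Finset.univ) fun i _ ↦
    hasSubgaussianMGF_of_mem_Icc_of_integral_eq_zero (hmeas i) (hbdd i) (hmean i)
  refine (hsub.measure_abs_ge_le hε).trans_eq ?_
  congr 2
  push_cast
  rw [Finset.sum_const, Finset.card_univ, nsmul_eq_mul, Real.norm_eq_abs, div_pow, sq_abs]
  field_simp

end ProbabilityTheory

lemma one_sub_sum_measureReal_le_of_compl_subset {Ω ι : Type*} [MeasurableSpace Ω] [Fintype ι]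
    {μ : Measure Ω} [IsProbabilityMeasure μ] {s : Set Ω} {B : ι → Set Ω}
    (hs : sᶜ ⊆ ⋃ k, B k) : 1 - ∑ k, μ.real (B k) ≤ μ.real s := by
  have hcover : 1 ≤ μ.real s + μ.real sᶜ := by
    simpa using measureReal_union_le (μ := μ) s sᶜ
  have hcompl := (measureReal_mono hs).trans (measureReal_iUnion_fintype_le (μ := μ) B)
  linarith

lemma abs_sum_mul_le_sum_mul_abs {ι : Type*} [Fintype ι] {g v θ : ι → ℝ}
    (hg : ∀ k, |g k| ≤ v k) : |∑ k, g k * θ k| ≤ ∑ k, v k * |θ k| :=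
  (Finset.abs_sum_le_sum_abs _ _).trans <| Finset.sum_le_sum fun k _ ↦ by
    rw [abs_mul]; exact mul_le_mul_of_nonneg_right (hg k) (abs_nonneg _)

theorem risk_le_add_penalty_of_penalized_le {ι : Type*} [Fintype ι] {ρ : ℝ} {w g : ι → ℝ}
    (hg : ∀ k, |g k| ≤ ρ * w k) {Rout Rhat : (ι → ℝ) → ℝ} {c : ℝ}
    (haff : ∀ θ, Rout θ - Rhat θ = ∑ k, g k * θ k + c) {θhat θstar : ι → ℝ}
    (hmin : Rhat θhat + ρ * ∑ k, w k * |θhat k| ≤ Rhat θstar + ρ * ∑ k, w k * |θstar k|) :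
    Rout θhat ≤ Rout θstar + 2 * ρ * ∑ k, w k * |θstar k| := by
  have hdev : ∀ θ : ι → ℝ, |∑ k, g k * θ k| ≤ ρ * ∑ k, w k * |θ k| := fun θ ↦ by
    simpa only [Finset.mul_sum, mul_assoc] using abs_sum_mul_le_sum_mul_abs (θ := θ) hg
  have h₁ := (abs_le.1 (hdev θhat)).2
  have h₂ := (abs_le.1 (hdev θstar)).1
  linarith [haff θhat, haff θstar]

lemma rpow_one_sub_two_mul {n γ : ℝ} (hn : 0 < n) : n ^ (1 - 2 * γ) = n * (n ^ (-γ)) ^ 2 := by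
  rw [show 1 - 2 * γ = 1 + -γ + -γ by ring, rpow_add hn, rpow_add hn, rpow_one]
  ring

theorem main_theorem_regularized_learning_general
    {Ω : Type*} [MeasurableSpace Ω] (μ : Measure Ω) [IsProbabilityMeasure μ]
    (R n : ℕ) (hn : 0 < n)
    (Y γ w₀ : ℝ) (hw₀ : 0 < w₀)
    (w : Fin R → ℝ) (hw : ∀ k, w₀ ≤ w k)
    (z : Fin R → Fin n → Ω → ℝ)
    (hmeas : ∀ k i, Measurable (z k i))
    (hindep : ∀ k, iIndepFun (z k) μ)
    (hbdd : ∀ k i, ∀ᵐ ω ∂μ, z k i ω ∈ Set.Icc (-Y) Y)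
    (hmean : ∀ k i, (∫ ω, z k i ω ∂μ) = 0)
    (Rout : (Fin R → ℝ) → ℝ) (Rhat : Ω → (Fin R → ℝ) → ℝ)
    (haffine : ∀ ω, ∃ c : ℝ, ∀ θ,
      Rout θ - Rhat ω θ = (∑ k, ((n : ℝ)⁻¹ * ∑ i, z k i ω) * θ k) + c)
    (θhat : Ω → Fin R → ℝ) (θstar : Fin R → ℝ)
    (hθhat : ∀ ω θ,
      Rhat ω (θhat ω) + (n : ℝ) ^ (-γ) * ∑ k, w k * |θhat ω k| ≤
        Rhat ω θ + (n : ℝ) ^ (-γ) * ∑ k, w k * |θ k|) :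
    1 - 2 * R * Real.exp (-(w₀ ^ 2 * (n : ℝ) ^ (1 - 2 * γ)) / (2 * Y ^ 2)) ≤
      (μ {ω | Rout (θhat ω) ≤
        Rout θstar + 2 * (n : ℝ) ^ (-γ) * ∑ k, w k * |θstar k|}).toReal := by
  have hn₀ : (0 : ℝ) < n := Nat.cast_pos.2 hn
  set ρ := (n : ℝ) ^ (-γ)
  have hρ : 0 ≤ ρ := rpow_nonneg hn₀.le _
  set B : Fin R → Set Ω := fun k ↦ {ω | n * (ρ * w₀) ≤ |∑ i, z k i ω|}
  have hgood : {ω | Rout (θhat ω) ≤ Rout θstar + 2 * ρ * ∑ k, w k * |θstar k|}ᶜ ⊆ ⋃ k, B k := by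
    intro ω hω
    by_contra hsmall
    simp only [B, Set.mem_iUnion, Set.mem_ofPred_eq, not_exists, not_le] at hsmall
    obtain ⟨c, hc⟩ := haffine ω
    refine hω (risk_le_add_penalty_of_penalized_le (fun k ↦ ?_) hc (hθhat ω θstar))
    rw [abs_mul, abs_inv, Nat.abs_cast, inv_mul_le_iff₀ hn₀]
    calc |∑ i, z k i ω| ≤ n * (ρ * w₀) := (hsmall k).le
      _ ≤ n * (ρ * w k) := by gcongr; exact hw k
  have htail : ∀ k, μ.real (B k) ≤ 2 * exp (-(w₀ ^ 2 * (n : ℝ) ^ (1 - 2 * γ)) / (2 * Y ^ 2)) := by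
    intro k
    refine (measure_abs_sum_ge_le_of_mem_Icc (hindep k) (fun i ↦ (hmeas k i).aemeasurable)
      (hbdd k) (hmean k) (by positivity)).trans_eq ?_
    rw [Fintype.card_fin, rpow_one_sub_two_mul hn₀,
      show -2 * (n * (ρ * w₀)) ^ 2 / (n * (Y - -Y) ^ 2) =
        -(w₀ ^ 2 * (n * ρ ^ 2)) * n / (2 * Y ^ 2 * n) by ring, mul_div_mul_right _ _ hn₀.ne']
  calc 1 - 2 * R * exp (-(w₀ ^ 2 * (n : ℝ) ^ (1 - 2 * γ)) / (2 * Y ^ 2))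
      ≤ 1 - ∑ k, μ.real (B k) := by
        have := Finset.sum_le_sum fun k (_ : k ∈ Finset.univ) ↦ htail k
        simp only [Finset.sum_const, Finset.card_univ, Fintype.card_fin, nsmul_eq_mul] at this
        linarith
    _ ≤ _ := one_sub_sum_measureReal_le_of_compl_subset hgood

theorem main_theorem_regularized_learning
    {Ω : Type*} [MeasurableSpace Ω] (μ : Measure Ω) [IsProbabilityMeasure μ]
    (R n : ℕ) (hR : 0 < R) (hn : 0 < n)
    (Y γ w₀ : ℝ) (hY : 0 < Y) (hγ : γ ∈ Set.Ioo (0 : ℝ) (1 / 2)) (hw₀ : 0 < w₀)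
    (w : Fin R → ℝ) (hw : ∀ k, w₀ ≤ w k)
    (z : Fin R → Fin n → Ω → ℝ)
    (hmeas : ∀ k i, Measurable (z k i))
    (hindep : ∀ k, iIndepFun (z k) μ)
    (hident : ∀ k i j, IdentDistrib (z k i) (z k j) μ μ)
    (hbdd : ∀ k i, ∀ᵐ ω ∂μ, z k i ω ∈ Set.Icc (-Y) Y)
    (hmean : ∀ k i, (∫ ω, z k i ω ∂μ) = 0)
    (Rout : (Fin R → ℝ) → ℝ) (Rhat : Ω → (Fin R → ℝ) → ℝ)
    (haffine : ∀ ω, ∃ c : ℝ, ∀ θ,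
      Rout θ - Rhat ω θ = (∑ k, ((n : ℝ)⁻¹ * ∑ i, z k i ω) * θ k) + c)
    (θhat : Ω → Fin R → ℝ) (θstar : Fin R → ℝ)
    (hθhat : ∀ ω θ,
      Rhat ω (θhat ω) + (n : ℝ) ^ (-γ) * ∑ k, w k * |θhat ω k| ≤
        Rhat ω θ + (n : ℝ) ^ (-γ) * ∑ k, w k * |θ k|)
    (hθstar : ∀ θ, Rout θstar ≤ Rout θ)
    (hmeasev : MeasurableSet
      {ω | Rout (θhat ω) ≤ Rout θstar + 2 * (n : ℝ) ^ (-γ) * ∑ k, w k * |θstar k|}) :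
    1 - 2 * R * Real.exp (-(w₀ ^ 2 * (n : ℝ) ^ (1 - 2 * γ)) / (2 * Y ^ 2)) ≤
      (μ {ω | Rout (θhat ω) ≤
        Rout θstar + 2 * (n : ℝ) ^ (-γ) * ∑ k, w k * |θstar k|}).toReal :=
  main_theorem_regularized_learning_general μ R n hn Y γ w₀ hw₀ w hw z hmeas hindep hbdd hmean Rout
    Rhat haffine θhat θstar hθhat
end
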